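/- For j ∈ [n] and u ∈ ℂ set η_j(u) := Σ_{i∈[n]} e_i · (a_{i,j} + u·δ_{i,j}) ∈ Λ. Then for all i,j ∈ [n] and all u ∈ ℂ: η_i(u+1) η_j(u) + η_j(u+1) η_i(u) = 0. -/

import Mathlib

open Matrix
open scoped TensorProduct

set_option synthInstance.maxHeartbeats 1000000
set_option maxHeartbeats 1000000

noncomputable section

attribute [local instance] LieRing.ofAssociativeRing

/-- The `N×N` matrix `J_N` with 1's on the anti-diagonal and 0's elsewhere. -/
def antiDiagJ (N : ℕ) : Matrix (Fin N) (Fin N) ℂ :=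
  Matrix.of fun i j => if j = Fin.rev i then 1 else 0

/-- The orthogonal Lie algebra `𝔬_{2n} = {X : Xᵀ J_{2n} + J_{2n} X = 0}`. -/
abbrev oLie (n : ℕ) : LieSubalgebra ℂ (Matrix (Fin (2 * n)) (Fin (2 * n)) ℂ) :=
  skewAdjointMatricesLieSubalgebra (antiDiagJ (2 * n))

/-- The universal enveloping algebra `U(𝔬_{2n})`. -/
abbrev Uo (n : ℕ) := UniversalEnvelopingAlgebra ℂ (oLie n)

/-- The canonical map `ι : 𝔬_{2n} → U(𝔬_{2n})`. -/
def uIota (n : ℕ) : oLie n →ₗ⁅ℂ⁆ Uo n := UniversalEnvelopingAlgebra.ι ℂ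

/-- Noncommutative Pfaffian of a matrix `M` with entries in a `ℂ`-algebra satisfying
`M_{j,i} = −M_{i,j}`:
`Pf(M) := (1/(2^m m!)) Σ_{σ∈S_{2m}} sgn(σ) M_{σ(1),σ(2)} ⋯ M_{σ(2m−1),σ(2m)}`
(junk value `0` if the size is odd). -/
def ncPf {A : Type*} [Ring A] [Algebra ℂ A] {m : ℕ} (M : Matrix (Fin m) (Fin m) A) : A :=
  if hm : m % 2 = 0 then
    ((2 : ℂ) ^ (m / 2) * (m / 2).factorial)⁻¹ •
      ∑ σ : Equiv.Perm (Fin m),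
        (Equiv.Perm.sign σ : ℤ) •
          (List.ofFn fun i : Fin (m / 2) =>
            M (σ ⟨2 * i.1, by have := i.2; omega⟩)
              (σ ⟨2 * i.1 + 1, by have := i.2; omega⟩)).prod
  else 0

/-- `Λ := ⋀(ℂ^{2n}) ⊗ U(𝔬_{2n})`. -/
abbrev Lam (n : ℕ) := ExteriorAlgebra ℂ (Fin (2 * n) → ℂ) ⊗[ℂ] Uo n

/-- `e_i ∈ Λ`, the image of the `i`-th standard basis vector. -/
def eL (n : ℕ) (i : Fin (2 * n)) : Lam n :=
  ExteriorAlgebra.ι ℂ (Pi.single i 1) ⊗ₜ[ℂ] 1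

/-- The embedding `U(𝔬_{2n}) → Λ`, `u ↦ 1 ⊗ u`. -/
def embU (n : ℕ) (u : Uo n) : Lam n := 1 ⊗ₜ[ℂ] u

/-- `η_j(u) := Σ_{i∈[n]} e_i (a_{i,j} + u δ_{i,j}) ∈ Λ`, with `a_{i,j} = ι(X_{i,j})`. -/
def etaL (n : ℕ) (𝒳 : Fin (2 * n) → Fin (2 * n) → oLie n) (j : Fin n) (u : ℂ) : Lam n :=
  ∑ i : Fin n,
    eL n (Fin.castLE (by omega) i) *
      embU n (uIota n (𝒳 (Fin.castLE (by omega) i) (Fin.castLE (by omega) j)) +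
        algebraMap ℂ (Uo n) (if i = j then u else 0))

/-!
Write `η_j(u) = Σ_k e_k (A + u)_{k,j}` with `A = (a_{k,j})`. Since the `e_k` commute with
`U(𝔬_{2n})` and anticommute among themselves (with `e_k² = 0`), the left-hand side equals
`Σ_{k,l} e_k e_l C_{k,l}` with
`C_{k,l} = (A + u + 1)_{k,i} (A + u)_{l,j} + (A + u + 1)_{k,j} (A + u)_{l,i}`,
so it suffices that `C` is symmetric in `k, l`. For indices in `[n]` the reflected halves
`E_{-j,-i}` of the `X_{i,j}` never meet, so the `a_{i,j}` satisfy the commutation relations of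
the matrix units of `𝔤𝔩_n`; the shift by `1` between the two factors is exactly what makes the
commutator terms of `C_{k,l} - C_{l,k}` cancel.
-/

theorem sum_sum_mul_eq_zero_of_antisymm_of_symm {ι A : Type*} [Fintype ι]
    [NonUnitalNonAssocRing A] (E C : ι → ι → A) (hE : ∀ k l, E k l + E l k = 0)
    (hE₀ : ∀ k, E k k = 0) (hC : ∀ k l, C k l = C l k) :
    ∑ k, ∑ l, E k l * C k l = 0 := by
  rw [← Fintype.sum_prod_type']
  refine Finset.sum_involution (fun p _ => p.swap) (fun p _ => ?_) (fun p _ hp h => ?_)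
    (fun _ _ => Finset.mem_univ _) (fun p _ => p.swap_swap)
  · rw [Prod.fst_swap, Prod.snd_swap, hC p.2, ← add_mul, hE, zero_mul]
  · obtain ⟨k, l⟩ := p
    obtain rfl : l = k := congrArg Prod.fst h
    exact hp (by rw [hE₀, zero_mul])

theorem sum_mul_sum_eq_sum_sum_of_commute {ι A : Type*} [Fintype ι] [Semiring A]
    (e x y : ι → A) (h : ∀ k l, Commute (x k) (e l)) :
    (∑ k, e k * x k) * ∑ l, e l * y l = ∑ k, ∑ l, e k * e l * (x k * y l) := by
  rw [Finset.sum_mul_sum]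
  refine Finset.sum_congr rfl fun k _ => Finset.sum_congr rfl fun l _ => ?_
  rw [mul_assoc, (h k l).left_comm, ← mul_assoc, ← mul_assoc, mul_assoc]

section GlRelations

variable {ι R A : Type*} [DecidableEq ι] [CommRing R] [Ring A] [Algebra R A]

def SatisfiesGlRelations (P : ι → ι → A) : Prop :=
  ∀ a b c d, P a b * P c d - P c d * P a b =
    (if b = c then P a d else 0) - (if d = a then P c b else 0)

def addScalar (P : ι → ι → A) (u : R) (a b : ι) : A :=
  P a b + algebraMap R A (if a = b then u else 0)

theorem addScalar_mul_sub_mul (P : ι → ι → A) (hP : SatisfiesGlRelations P) (u : R)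
    (i j k l : ι) :
    addScalar P (u + 1) k i * addScalar P u l j - addScalar P (u + 1) l j * addScalar P u k i =
      (if i = l then P k j else 0) - (if j = k then P l i else 0) +
        (if k = i then P l j else 0) - (if l = j then P k i else 0) := by
  simp only [addScalar, Algebra.algebraMap_eq_smul_one, add_mul, mul_add, smul_mul_assoc,
    mul_smul_comm, one_mul, mul_one, sub_eq_iff_eq_add.mp (hP k i l j)]
  split_ifs <;> module

theorem addScalar_mul_add_mul_symm (P : ι → ι → A) (hP : SatisfiesGlRelations P) (u : R)
    (i j k l : ι) :
    addScalar P (u + 1) k i * addScalar P u l j + addScalar P (u + 1) k j * addScalar P u l i =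
      addScalar P (u + 1) l i * addScalar P u k j +
        addScalar P (u + 1) l j * addScalar P u k i := by
  rw [← sub_eq_zero]
  calc _ = (addScalar P (u + 1) k i * addScalar P u l j -
          addScalar P (u + 1) l j * addScalar P u k i) +
        (addScalar P (u + 1) k j * addScalar P u l i -
          addScalar P (u + 1) l i * addScalar P u k j) := by abel
    _ = 0 := by
      rw [addScalar_mul_sub_mul P hP, addScalar_mul_sub_mul P hP]
      simp only [eq_comm]
      abel

end GlRelations

theorem Matrix.single_mul_single_eq_ite {l m o R : Type*} [DecidableEq l] [DecidableEq m]
    [DecidableEq o] [Fintype m] [NonUnitalNonAssocSemiring R] (a : l) (b c : m) (d : o) (x y : R) :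
    single a b x * single c d y = if b = c then single a d (x * y) else 0 := by
  split_ifs with h
  · rw [h, single_mul_single_same]
  · exact single_mul_single_of_ne (h := h) ..

section SkewSingle

variable {R : Type*} [Ring R] {N : ℕ}

-- The paper's `X_{a,b}`: the index `-m = 2n+1-m` of `[2n]` becomes `Fin.rev m`.
def skewSingle (a b : Fin N) : Matrix (Fin N) (Fin N) R :=
  Matrix.single a b 1 - Matrix.single b.rev a.rev 1

theorem skewSingle_mul_sub_mul {a b c d : Fin N} (hbd : b ≠ d.rev) (hca : c ≠ a.rev) :
    skewSingle a b * skewSingle c d - skewSingle c d * (skewSingle a b : Matrix _ _ R) =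
      (if b = c then skewSingle a d else 0) - (if d = a then skewSingle c b else 0) := by
  have hdb : d ≠ b.rev := (Fin.rev_ne_iff.mpr hbd).symm
  have hca' : c.rev ≠ a := Fin.rev_ne_iff.mpr hca
  simp only [skewSingle, sub_mul, mul_sub, Matrix.single_mul_single_eq_ite, mul_one, Fin.rev_inj,
    hbd, hca.symm, hdb, hca', if_false, eq_comm (a := c) (b := b), eq_comm (a := a) (b := d)]
  split_ifs <;> subst_vars <;> abel

end SkewSingle

theorem LieSubalgebra.lie_eq_of_coe_eq_skewSingle {R : Type*} [CommRing R] {N : ℕ}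
    {L : LieSubalgebra R (Matrix (Fin N) (Fin N) R)} (X : Fin N → Fin N → L)
    (hX : ∀ a b, (X a b : Matrix (Fin N) (Fin N) R) = skewSingle a b)
    {a b c d : Fin N} (hbd : b ≠ d.rev) (hca : c ≠ a.rev) :
    ⁅X a b, X c d⁆ = (if b = c then X a d else 0) - (if d = a then X c b else 0) := by
  ext1
  rw [LieSubalgebra.coe_bracket, Ring.lie_def, hX, hX, skewSingle_mul_sub_mul hbd hca]
  split_ifs <;> simp [hX]

theorem LieHom.satisfiesGlRelations_of_coe_eq_skewSingle {R A ι : Type*} [DecidableEq ι]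
    [CommRing R] [Ring A] [Algebra R A] {N : ℕ} {L : LieSubalgebra R (Matrix (Fin N) (Fin N) R)}
    (f : L →ₗ⁅R⁆ A) (X : Fin N → Fin N → L)
    (hX : ∀ a b, (X a b : Matrix (Fin N) (Fin N) R) = skewSingle a b)
    {e : ι → Fin N} (he : Function.Injective e) (hrev : ∀ a b, e a ≠ (e b).rev) :
    SatisfiesGlRelations fun a b => f (X (e a) (e b)) := by
  intro a b c d
  rw [← Ring.lie_def, ← f.map_lie, LieSubalgebra.lie_eq_of_coe_eq_skewSingle X hX (hrev b d)
    (hrev c a), map_sub, apply_ite f, apply_ite f, map_zero]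
  simp only [he.eq_iff]

theorem Fin.castLE_ne_rev_castLE {n : ℕ} (h : n ≤ 2 * n) (a b : Fin n) :
    Fin.castLE h a ≠ (Fin.castLE h b).rev := by
  rw [Ne, Fin.ext_iff, Fin.val_rev, Fin.val_castLE, Fin.val_castLE]
  omega

theorem eL_mul_eL_add_swap (n : ℕ) (x y : Fin (2 * n)) :
    eL n x * eL n y + eL n y * eL n x = 0 := by
  rw [eL, eL, Algebra.TensorProduct.tmul_mul_tmul, Algebra.TensorProduct.tmul_mul_tmul,
    ← TensorProduct.add_tmul, ExteriorAlgebra.ι_add_mul_swap, TensorProduct.zero_tmul]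

theorem eL_mul_self (n : ℕ) (x : Fin (2 * n)) : eL n x * eL n x = 0 := by
  rw [eL, Algebra.TensorProduct.tmul_mul_tmul, ExteriorAlgebra.ι_sq_zero, TensorProduct.zero_tmul]

theorem commute_embU_eL (n : ℕ) (u : Uo n) (x : Fin (2 * n)) : Commute (embU n u) (eL n x) :=
  (Commute.one_left _).tmul (Commute.one_right _)

theorem embU_eq_includeRight (n : ℕ) :
    embU n = Algebra.TensorProduct.includeRight (A := ExteriorAlgebra ℂ (Fin (2 * n) → ℂ)) :=
  rfl

theorem eta_anticommutation_general (n : ℕ)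
    (𝒳 : Fin (2 * n) → Fin (2 * n) → oLie n)
    (h𝒳 : ∀ i j, (𝒳 i j : Matrix (Fin (2 * n)) (Fin (2 * n)) ℂ) =
      Matrix.single i j 1 - Matrix.single (Fin.rev j) (Fin.rev i) 1) :
    ∀ (i j : Fin n) (u : ℂ),
      etaL n 𝒳 i (u + 1) * etaL n 𝒳 j u + etaL n 𝒳 j (u + 1) * etaL n 𝒳 i u = 0 := by
  intro i j u
  have hle : n ≤ 2 * n := by omega
  set e : Fin n → Fin (2 * n) := Fin.castLE hle
  set P : Fin n → Fin n → Uo n := fun a b => uIota n (𝒳 (e a) (e b))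
  have hP : SatisfiesGlRelations P :=
    (uIota n).satisfiesGlRelations_of_coe_eq_skewSingle 𝒳 h𝒳 (Fin.castLE_injective hle)
      (Fin.castLE_ne_rev_castLE hle)
  have hη : ∀ m v, etaL n 𝒳 m v = ∑ k, eL n (e k) * embU n (addScalar P v k m) :=
    fun _ _ => rfl
  simp only [hη, sum_mul_sum_eq_sum_sum_of_commute _ _ _ fun _ _ => commute_embU_eL n _ _,
    ← Finset.sum_add_distrib, ← mul_add]
  refine sum_sum_mul_eq_zero_of_antisymm_of_symm _ _ (fun k l => eL_mul_eL_add_swap n _ _)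
    (fun k => eL_mul_self n _) fun k l => ?_
  simp only [embU_eq_includeRight, ← map_mul, ← map_add, addScalar_mul_add_mul_symm P hP]

/-- the shifted anticommutation relations
`η_i(u+1) η_j(u) + η_j(u+1) η_i(u) = 0` in `Λ`. -/
theorem eta_anticommutation (n : ℕ) (hn : 1 ≤ n)
    (𝒳 : Fin (2 * n) → Fin (2 * n) → oLie n)
    (h𝒳 : ∀ i j, (𝒳 i j : Matrix (Fin (2 * n)) (Fin (2 * n)) ℂ) =
      Matrix.single i j 1 - Matrix.single (Fin.rev j) (Fin.rev i) 1) :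
    ∀ (i j : Fin n) (u : ℂ),
      etaL n 𝒳 i (u + 1) * etaL n 𝒳 j u + etaL n 𝒳 j (u + 1) * etaL n 𝒳 i u = 0 :=
  eta_anticommutation_general n 𝒳 h𝒳

end
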